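/- arXiv:1312.0183 — 10 statements merged into one kernel-verified Lean document; each statement's English description precedes it below -/
import Mathlib

section
/- Let (V, ω) be a multisymplectic vector space of degree k+1, let U and W be linear subspaces of V, and let l₁, l₂ ∈ {1, …, k} with l₁ + l₂ ≤ k + 1. Then U_I^{⊥,l₁} ∩ W_I^{⊥,l₂} ⊆ (U + W)_I^{⊥,l₁+l₂−1}. -/
open Module

/-- Type-I l-th orthogonal complement of `W` with respect to the alternating
`(k+1)`-form `ω`: vectors `v` such that `ω (v, w₁, …, w_l, u₁, …, u_{k-l}) = 0`
for all `w₁, …, w_l ∈ W` (the first `l` entries after `v`) and arbitrary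
remaining entries. -/
def TypeIOrth {V : Type*} [AddCommGroup V] [Module ℝ V] {k : ℕ}
    (ω : V [⋀^Fin (k+1)]→ₗ[ℝ] ℝ) (W : Submodule ℝ V) (l : ℕ) : Set V :=
  {v | ∀ f : Fin k → V, (∀ i : Fin k, (i : ℕ) < l → f i ∈ W) → ω (Fin.cons v f) = 0}

/-!
Expanding every entry of `U ⊔ W` as `u + w` writes `ω (v, f₁, …, f_k)` as a sum of terms
in which each of the first `l₁ + l₂ - 1` entries lies in `U` or in `W`. By pigeonhole at least
`l₁` of them lie in `U` or at least `l₂` lie in `W`, and since `ω` is alternating these entries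
may be permuted to the front, where the orthogonality of `v` kills the term.
-/

open Finset

theorem Finset.le_card_filter_or_le_card_filter_not {α : Type*} (s : Finset α) (p : α → Prop)
    [DecidablePred p] {l₁ l₂ : ℕ} (h : l₁ + l₂ ≤ #s + 1) :
    l₁ ≤ #(s.filter p) ∨ l₂ ≤ #(s.filter fun a ↦ ¬p a) := by
  have := s.card_filter_add_card_filter_not p
  omega

section

variable {R M N ι : Type*} [CommRing R] [AddCommGroup M] [Module R M] [AddCommGroup N]
  [Module R N]

theorem MultilinearMap.map_eq_zero_of_forall_mem_sup [Fintype ι]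
    (g : MultilinearMap R (fun _ : ι ↦ M) N) (s : Set ι) (P Q : Submodule R M)
    (hg : ∀ f : ι → M, (∀ i ∈ s, f i ∈ P ∨ f i ∈ Q) → g f = 0)
    {f : ι → M} (hf : ∀ i ∈ s, f i ∈ P ⊔ Q) : g f = 0 := by
  classical
  have hsplit : ∀ i, ∃ a b, a + b = f i ∧ (i ∈ s → a ∈ P ∧ b ∈ Q) := by
    intro i
    by_cases hi : i ∈ s
    · obtain ⟨a, ha, b, hb, hab⟩ := Submodule.mem_sup.mp (hf i hi)
      exact ⟨a, b, hab, fun _ ↦ ⟨ha, hb⟩⟩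
    · exact ⟨f i, 0, add_zero _, fun h ↦ absurd h hi⟩
  choose a b hab hmem using hsplit
  have hf_eq : f = a + b := funext fun i ↦ (hab i).symm
  rw [hf_eq, g.map_add_univ]
  refine Finset.sum_eq_zero fun t _ ↦ hg _ fun i hi ↦ ?_
  by_cases hit : i ∈ t
  · exact .inl (by simpa [hit] using (hmem i hi).1)
  · exact .inr (by simpa [hit] using (hmem i hi).2)

theorem AlternatingMap.map_eq_zero_of_le_card {k l : ℕ} (g : M [⋀^Fin k]→ₗ[R] N)
    {W : Submodule R M} (hg : ∀ f : Fin k → M, (∀ i : Fin k, (i : ℕ) < l → f i ∈ W) → g f = 0)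
    {f : Fin k → M} {s : Finset (Fin k)} (hs : l ≤ #s) (hf : ∀ i ∈ s, f i ∈ W) : g f = 0 := by
  obtain ⟨t, hts, ht⟩ := Finset.exists_subset_card_eq hs
  have hcard : Fintype.card {i : Fin k // (i : ℕ) < l} = Fintype.card {i // i ∈ t} := by
    rw [Fintype.card_subtype, Fin.card_filter_val_lt, Fintype.card_coe, ht]
    exact min_eq_right (ht ▸ card_le_univ t |>.trans_eq (Fintype.card_fin k))
  set σ : Equiv.Perm (Fin k) := (Fintype.equivOfCardEq hcard).extendSubtype
  have hσ : g (f ∘ σ) = 0 :=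
    hg _ fun i hi ↦ hf _ (hts (Equiv.extendSubtype_mem _ i hi))
  rwa [g.map_perm, smul_eq_zero_iff_eq] at hσ

end

theorem typeIOrth_inter_subset_sup_general
    {V : Type*} [AddCommGroup V] [Module ℝ V]
    {k : ℕ} (ω : V [⋀^Fin (k+1)]→ₗ[ℝ] ℝ)
    (U W : Submodule ℝ V) (l₁ l₂ : ℕ)
    (hsum : l₁ + l₂ ≤ k + 1) :
    TypeIOrth ω U l₁ ∩ TypeIOrth ω W l₂ ⊆ TypeIOrth ω (U ⊔ W) (l₁ + l₂ - 1) := by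
  classical
  rintro v ⟨hvU, hvW⟩ f hf
  refine (ω.curryLeft v).toMultilinearMap.map_eq_zero_of_forall_mem_sup
    {i | (i : ℕ) < l₁ + l₂ - 1} U W (fun f hf ↦ ?_) hf
  set s : Finset (Fin k) := {i | (i : ℕ) < l₁ + l₂ - 1}
  have hs : #s = l₁ + l₂ - 1 := by
    rw [Fin.card_filter_val_lt]
    omega
  rcases s.le_card_filter_or_le_card_filter_not (l₁ := l₁) (l₂ := l₂)
      (fun i ↦ f i ∈ U) (by omega) with hU | hW
  · exact (ω.curryLeft v).map_eq_zero_of_le_card (hvU ·) hU fun i hi ↦ (mem_filter.mp hi).2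
  · refine (ω.curryLeft v).map_eq_zero_of_le_card (hvW ·) hW fun i hi ↦ ?_
    obtain ⟨his, hiU⟩ := mem_filter.mp hi
    exact (hf i (mem_filter.mp his).2).resolve_left hiU

/-- in a multisymplectic vector space `(V, ω)` of degree `k+1`, for
`l₁, l₂ ∈ {1, …, k}` with `l₁ + l₂ ≤ k + 1`,
`U_I^{⊥,l₁} ∩ W_I^{⊥,l₂} ⊆ (U + W)_I^{⊥,l₁+l₂−1}`. -/
theorem typeIOrth_inter_subset_sup
    {V : Type*} [AddCommGroup V] [Module ℝ V] [FiniteDimensional ℝ V]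
    {k : ℕ} (hk : 1 ≤ k) (ω : V [⋀^Fin (k+1)]→ₗ[ℝ] ℝ)
    (hnd : ∀ v : V, (∀ u : Fin k → V, ω (Fin.cons v u) = 0) → v = 0)
    (U W : Submodule ℝ V) (l₁ l₂ : ℕ)
    (hl₁ : 1 ≤ l₁) (hl₁k : l₁ ≤ k) (hl₂ : 1 ≤ l₂) (hl₂k : l₂ ≤ k)
    (hsum : l₁ + l₂ ≤ k + 1) :
    TypeIOrth ω U l₁ ∩ TypeIOrth ω W l₂ ⊆ TypeIOrth ω (U ⊔ W) (l₁ + l₂ - 1) :=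
  typeIOrth_inter_subset_sup_general ω U W l₁ l₂ hsum
end

section
/- Let (V, ω) be a multisymplectic vector space of degree k+1 and let W be a linear subspace of V of codimension 1. Then W is Type-I k-coisotropic, i.e. W_I^{⊥,k} ⊆ W. -/
open Module

/-- in a multisymplectic vector space `(V, ω)` of degree `k+1`, every
subspace `W` of codimension 1 is Type-I `k`-coisotropic: `W_I^{⊥,k} ⊆ W`. -/
theorem typeIOrth_codim_one_coisotropic
    {V : Type*} [AddCommGroup V] [Module ℝ V] [FiniteDimensional ℝ V]
    {k : ℕ} (hk : 1 ≤ k) (ω : V [⋀^Fin (k+1)]→ₗ[ℝ] ℝ)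
    (hnd : ∀ v : V, (∀ u : Fin k → V, ω (Fin.cons v u) = 0) → v = 0)
    (W : Submodule ℝ V) (hcodim : finrank ℝ (V ⧸ W) = 1) :
    TypeIOrth ω W k ⊆ (W : Set V) := by
  intro v hv
  by_contra hvW
  -- the image of v in V ⧸ W is nonzero, hence spans the 1-dim quotient
  have hq : (Submodule.Quotient.mk v : V ⧸ W) ≠ 0 := by
    simpa [Submodule.Quotient.mk_eq_zero] using hvW
  have hspan := (finrank_eq_one_iff_of_nonzero' (Submodule.Quotient.mk v) hq).mp hcodim
  -- every x ∈ V decomposes as c • v + w with w ∈ W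
  have hdec : ∀ x : V, ∃ c : ℝ, x - c • v ∈ W := by
    intro x
    obtain ⟨c, hc⟩ := hspan (Submodule.Quotient.mk x)
    refine ⟨c, ?_⟩
    rw [← Submodule.Quotient.mk_eq_zero, Submodule.Quotient.mk_sub,
      Submodule.Quotient.mk_smul, hc, sub_self]
  -- main claim by induction: replacing entries one by one
  have key : ∀ n : ℕ, ∀ u : Fin k → V, (∀ i : Fin k, n ≤ (i : ℕ) → u i ∈ W) →
      ω (Fin.cons v u) = 0 := by
    intro n
    induction n with
    | zero => intro u hu; exact hv u fun i _ => hu i (Nat.zero_le _)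
    | succ n ih =>
      intro u hu
      by_cases hn : n < k
      · set j : Fin k := ⟨n, hn⟩
        obtain ⟨c, hw⟩ := hdec (u j)
        have hrw : u = Function.update u j ((u j - c • v) + c • v) := by
          ext i
          by_cases hij : i = j
          · subst hij; simp
          · simp [Function.update_of_ne hij]
        have e1 : ω (Fin.cons v u) =
            ω (Fin.cons v (Function.update u j (u j - c • v)))
              + c • ω (Fin.cons v (Function.update u j v)) := by
          conv_lhs => rw [hrw]
          rw [Fin.cons_update, Fin.cons_update, Fin.cons_update]
          rw [AlternatingMap.map_update_add, AlternatingMap.map_update_smul]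
        have e2 : ω (Fin.cons v (Function.update u j v)) = 0 := by
          apply ω.map_eq_zero_of_eq _ (i := 0) (j := j.succ)
          · simp
          · exact (Fin.succ_ne_zero j).symm
        have e3 : ω (Fin.cons v (Function.update u j (u j - c • v))) = 0 := by
          apply ih
          intro i hi
          by_cases hij : i = j
          · subst hij; simpa using hw
          · rw [Function.update_of_ne hij]
            apply hu
            have : (i : ℕ) ≠ n := fun h => hij (Fin.ext h)
            omega
        rw [e1, e2, e3]; simp
      · apply ih
        intro i hi
        exact absurd (lt_of_le_of_lt hi i.isLt) (by omega)
  exact hvW (hnd v (fun u => key k u fun i hi => absurd i.isLt (by omega)) ▸ W.zero_mem)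
end

section
/- Let (V, ω) be a multisymplectic vector space of degree k+1 and let W be a nonzero linear subspace of V that is Type-I 1-isotropic (W ⊆ W_I^{⊥,1}). Then the codimension of W in V is at least k. -/
open Module

/-- in a multisymplectic vector space `(V, ω)` of degree `k+1`, a nonzero
Type-I 1-isotropic subspace `W` has codimension at least `k`. -/
theorem typeIOrth_one_isotropic_codim
    {V : Type*} [AddCommGroup V] [Module ℝ V] [FiniteDimensional ℝ V]
    {k : ℕ} (hk : 1 ≤ k) (ω : V [⋀^Fin (k+1)]→ₗ[ℝ] ℝ)
    (hnd : ∀ v : V, (∀ u : Fin k → V, ω (Fin.cons v u) = 0) → v = 0)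
    (W : Submodule ℝ V) (hW : W ≠ ⊥) (hiso : (W : Set V) ⊆ TypeIOrth ω W 1) :
    k ≤ finrank ℝ (V ⧸ W) := by
  obtain ⟨w, hwW, hw0⟩ := Submodule.exists_mem_ne_zero_of_ne_bot hW
  -- get u with ω (cons w u) ≠ 0
  have : ¬ ∀ u : Fin k → V, ω (Fin.cons w u) = 0 := fun h => hw0 (hnd w h)
  push_neg at this
  obtain ⟨u, hu⟩ := this
  -- isotropy specialized
  have iso0 : ∀ f : Fin k → V, f ⟨0, hk⟩ ∈ W → ω (Fin.cons w f) = 0 := by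
    intro f hf
    refine hiso hwW f ?_
    intro i hi
    have : i = ⟨0, hk⟩ := Fin.ext (Nat.lt_one_iff.mp hi)
    rwa [this]
  -- key: for x ∈ W, ω (cons w (update u j x)) = 0
  have key : ∀ (j : Fin k) (x : V), x ∈ W → ω (Fin.cons w (Function.update u j x)) = 0 := by
    intro j x hx
    by_cases hj : j = ⟨0, hk⟩
    · subst hj
      exact iso0 _ (by simpa using hx)
    · have hne : (⟨0, hk⟩ : Fin k).succ ≠ j.succ := fun h => hj (Fin.succ_injective _ h).symm
      have hswap := ω.map_swap (Fin.cons w (Function.update u j x)) hne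
      set g : Fin (k+1) → V := (Fin.cons w (Function.update u j x)) ∘ Equiv.swap (⟨0, hk⟩ : Fin k).succ j.succ with hg
      have hg0 : g 0 = w := by
        have h1 : (0 : Fin (k+1)) ≠ (⟨0, hk⟩ : Fin k).succ := (Fin.succ_ne_zero _).symm
        have h2 : (0 : Fin (k+1)) ≠ j.succ := (Fin.succ_ne_zero _).symm
        simp only [hg, Function.comp_apply, Equiv.swap_apply_of_ne_of_ne h1 h2, Fin.cons_zero]
      have hgt : Fin.tail g ⟨0, hk⟩ = x := by
        show g (Fin.succ ⟨0, hk⟩) = x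
        simp only [hg, Function.comp_apply, Equiv.swap_apply_left, Fin.cons_succ,
          Function.update_self]
      have : ω g = 0 := by
        have := iso0 (Fin.tail g) (by rw [hgt]; exact hx)
        rwa [← hg0, Fin.cons_self_tail g] at this
      rw [hswap] at this
      linarith [this]
  -- linear independence of images in quotient
  have li : LinearIndependent ℝ (fun i : Fin k => Submodule.Quotient.mk (p := W) (u i)) := by
    rw [Fintype.linearIndependent_iff]
    intro c hc j
    have hsum : (∑ i, c i • u i) ∈ W := by
      have hm : W.mkQ (∑ i, c i • u i) = ∑ i, c i • W.mkQ (u i) := by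
        simp
      have hz : W.mkQ (∑ i, c i • u i) = 0 := by
        rw [hm]; simp only [Submodule.mkQ_apply]; exact hc
      rwa [Submodule.mkQ_apply, Submodule.Quotient.mk_eq_zero] at hz
    -- linear map in slot j.succ
    set L := ω.toMultilinearMap.toLinearMap (Fin.cons w u) j.succ with hL
    have hLdef : ∀ x, L x = ω (Function.update (Fin.cons w u) j.succ x) := fun x => rfl
    have h1 : L (∑ i, c i • u i) = 0 := by
      rw [hLdef, ← Fin.cons_update]
      exact key j _ hsum
    have h2 : ∀ i, i ≠ j → L (u i) = 0 := by
      intro i hij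
      rw [hLdef]
      refine ω.map_eq_zero_of_eq _ (i := i.succ) (j := j.succ) ?_ (by simpa using hij)
      rw [Function.update_of_ne (by simpa using hij), Function.update_self, Fin.cons_succ]
    have h3 : L (u j) = ω (Fin.cons w u) := by
      have he : Function.update (Fin.cons w u) j.succ (u j) = (Fin.cons w u : Fin (k+1) → V) := by
        rw [Function.update_eq_self_iff]
        simp
      rw [hLdef, he]
    have : (∑ i, c i • u i) = ∑ i, c i • u i := rfl
    rw [map_sum] at h1
    have : ∑ i, c i • L (u i) = 0 := by
      simpa [map_smul] using h1
    rw [Finset.sum_eq_single j (fun i _ hij => by rw [h2 i hij, smul_zero]) (by simp)] at this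
    rw [h3] at this
    have := smul_eq_zero.mp this
    rcases this with h | h
    · exact h
    · exact absurd h hu
  have := li.fintype_card_le_finrank
  simpa using this
end

section
/- Let (V, ω) be a multisymplectic vector space of degree k+1, let W be a Type-I l-isotropic linear subspace of V (1 ≤ l ≤ k), and let l' satisfy l ≤ l' ≤ k. Then there exists a Type-I l'-Lagrangian subspace L of V with W ⊆ L. -/
open Module

/-- Key extension lemma: if `L` is `l'`-isotropic and `v` lies in the Type-I `l'`-orthogonal
of `L`, then `L ⊔ span {v}` is again `l'`-isotropic. -/
lemma extend_isotropic {V : Type*} [AddCommGroup V] [Module ℝ V] {k : ℕ}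
    (ω : V [⋀^Fin (k+1)]→ₗ[ℝ] ℝ) (l' : ℕ) (L : Submodule ℝ V) (v : V)
    (hL : (L : Set V) ⊆ TypeIOrth ω L l') (hv : v ∈ TypeIOrth ω L l') :
    ((L ⊔ Submodule.span ℝ {v} : Submodule ℝ V) : Set V)
      ⊆ TypeIOrth ω (L ⊔ Submodule.span ℝ {v}) l' := by
  set M := L ⊔ Submodule.span ℝ {v} with hMdef
  have hmem : ∀ x ∈ M, ∃ w ∈ L, ∃ a : ℝ, x = w + a • v := by
    intro x hx
    rcases Submodule.mem_sup.mp hx with ⟨w, hw, z, hz, rfl⟩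
    rcases Submodule.mem_span_singleton.mp hz with ⟨a, rfl⟩
    exact ⟨w, hw, a, rfl⟩
  -- R : we can replace the first m constrained slots by elements of M, front vector v
  have R : ∀ m : ℕ, ∀ f : Fin k → V,
      (∀ i : Fin k, (i : ℕ) < l' → f i ∈ M) →
      (∀ i : Fin k, m ≤ (i : ℕ) → (i : ℕ) < l' → f i ∈ L) →
      ω (Fin.cons v f) = 0 := by
    intro m
    induction m with
    | zero =>
      intro f _ h0
      exact hv f (fun i hi => h0 i (Nat.zero_le _) hi)
    | succ m ih =>
      intro f hf1 hf2
      by_cases hmk : m < k ∧ m < l'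
      · obtain ⟨hmk1, hml'⟩ := hmk
        set i₀ : Fin k := ⟨m, hmk1⟩ with hi₀
        obtain ⟨w, hw, a, hfa⟩ := hmem (f i₀) (hf1 i₀ hml')
        have key : f = Function.update f i₀ (w + a • v) := by
          rw [← hfa, Function.update_eq_self]
        have e1 : Fin.cons v (Function.update f i₀ (w + a • v))
            = Function.update ((Fin.cons v f : Fin (k+1) → V)) i₀.succ (w + a • v) := by
          ext j
          refine Fin.cases ?_ ?_ j
          · simp [(Fin.succ_ne_zero i₀).symm]
          · intro j'
            rcases eq_or_ne j' i₀ with rfl | h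
            · simp
            · simp [h, Function.update_of_ne, Fin.succ_injective _ |>.ne h]
        have hzero : ω (Function.update (Fin.cons v f) i₀.succ v) = 0 := by
          apply AlternatingMap.map_eq_zero_of_eq (i := (0 : Fin (k+1))) (j := i₀.succ)
          · rw [Function.update_of_ne (Fin.succ_ne_zero i₀).symm, Function.update_self,
              Fin.cons_zero]
          · exact (Fin.succ_ne_zero i₀).symm
        have hfirst : ω (Function.update (Fin.cons v f) i₀.succ w) = 0 := by
          rw [← Fin.cons_update]
          apply ih
          · intro i hi
            by_cases h : i = i₀
            · subst h; rw [Function.update_self]; exact Submodule.mem_sup_left hw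
            · rw [Function.update_of_ne h]; exact hf1 i hi
          · intro i hi hil'
            by_cases h : i = i₀
            · subst h; rw [Function.update_self]; exact hw
            · rw [Function.update_of_ne h]
              apply hf2 i _ hil'
              rcases Nat.eq_or_lt_of_le hi with h' | h'
              · exact absurd (Fin.ext h'.symm : i = i₀) h
              · exact h'
        calc ω (Fin.cons v f)
            = ω (Function.update (Fin.cons v f) i₀.succ (w + a • v)) := by
              conv_lhs => rw [key, e1]
          _ = ω (Function.update (Fin.cons v f) i₀.succ w)
                + a • ω (Function.update (Fin.cons v f) i₀.succ v) := by
              rw [ω.map_update_add, ω.map_update_smul]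
          _ = 0 := by rw [hfirst, hzero, smul_zero, add_zero]
      · apply ih f hf1
        intro i hi hil'
        rcases Nat.eq_or_lt_of_le hi with h | h
        · exact absurd ⟨h ▸ i.isLt, h ▸ hil'⟩ hmk
        · exact hf2 i h hil'
  have Rfull : ∀ f : Fin k → V, (∀ i : Fin k, (i : ℕ) < l' → f i ∈ M) →
      ω (Fin.cons v f) = 0 := by
    intro f hf1
    exact R l' f hf1 (fun i hi hil' => absurd (lt_of_le_of_lt hi hil') (lt_irrefl _))
  -- S : same with front vector in L
  have S : ∀ m : ℕ, ∀ x ∈ L, ∀ f : Fin k → V,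
      (∀ i : Fin k, (i : ℕ) < l' → f i ∈ M) →
      (∀ i : Fin k, m ≤ (i : ℕ) → (i : ℕ) < l' → f i ∈ L) →
      ω (Fin.cons x f) = 0 := by
    intro m
    induction m with
    | zero =>
      intro x hx f _ h0
      exact hL hx f (fun i hi => h0 i (Nat.zero_le _) hi)
    | succ m ih =>
      intro x hx f hf1 hf2
      by_cases hmk : m < k ∧ m < l'
      · obtain ⟨hmk1, hml'⟩ := hmk
        set i₀ : Fin k := ⟨m, hmk1⟩ with hi₀
        obtain ⟨w, hw, a, hfa⟩ := hmem (f i₀) (hf1 i₀ hml')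
        have key : f = Function.update f i₀ (w + a • v) := by
          rw [← hfa, Function.update_eq_self]
        have e1 : Fin.cons x (Function.update f i₀ (w + a • v))
            = Function.update ((Fin.cons x f : Fin (k+1) → V)) i₀.succ (w + a • v) := by
          ext j
          refine Fin.cases ?_ ?_ j
          · simp [(Fin.succ_ne_zero i₀).symm]
          · intro j'
            rcases eq_or_ne j' i₀ with rfl | h
            · simp
            · simp [h, Function.update_of_ne, Fin.succ_injective _ |>.ne h]
        have hswap : (Function.update (Fin.cons x f) i₀.succ v)
            ∘ (Equiv.swap (0 : Fin (k+1)) i₀.succ)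
            = Fin.cons v (Function.update f i₀ x) := by
          funext j
          simp only [Function.comp_apply]
          rcases eq_or_ne j 0 with rfl | hj0
          · rw [Equiv.swap_apply_left, Function.update_self, Fin.cons_zero]
          · rcases eq_or_ne j i₀.succ with rfl | hji
            · rw [Equiv.swap_apply_right, Function.update_of_ne (Fin.succ_ne_zero i₀).symm,
                Fin.cons_zero, Fin.cons_succ, Function.update_self]
            · rw [Equiv.swap_apply_of_ne_of_ne hj0 hji, Function.update_of_ne hji]
              obtain ⟨j', rfl⟩ : ∃ j', j = j'.succ := ⟨j.pred hj0, (Fin.succ_pred j hj0).symm⟩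
              rw [Fin.cons_succ, Fin.cons_succ, Function.update_of_ne]
              intro h
              exact hji (by rw [h])
        have hzero : ω (Function.update (Fin.cons x f) i₀.succ v) = 0 := by
          have hsw := ω.map_swap (Function.update (Fin.cons x f) i₀.succ v)
            (Fin.succ_ne_zero i₀).symm
          rw [hswap] at hsw
          have hR : ω (Fin.cons v (Function.update f i₀ x)) = 0 := by
            apply Rfull
            intro i hi
            by_cases h : i = i₀
            · subst h; rw [Function.update_self]; exact Submodule.mem_sup_left hx
            · rw [Function.update_of_ne h]; exact hf1 i hi
          rw [hR] at hsw
          linarith [hsw]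
        have hfirst : ω (Function.update (Fin.cons x f) i₀.succ w) = 0 := by
          rw [← Fin.cons_update]
          apply ih x hx
          · intro i hi
            by_cases h : i = i₀
            · subst h; rw [Function.update_self]; exact Submodule.mem_sup_left hw
            · rw [Function.update_of_ne h]; exact hf1 i hi
          · intro i hi hil'
            by_cases h : i = i₀
            · subst h; rw [Function.update_self]; exact hw
            · rw [Function.update_of_ne h]
              apply hf2 i _ hil'
              rcases Nat.eq_or_lt_of_le hi with h' | h'
              · exact absurd (Fin.ext h'.symm : i = i₀) h
              · exact h'
        calc ω (Fin.cons x f)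
            = ω (Function.update (Fin.cons x f) i₀.succ (w + a • v)) := by
              conv_lhs => rw [key, e1]
          _ = ω (Function.update (Fin.cons x f) i₀.succ w)
                + a • ω (Function.update (Fin.cons x f) i₀.succ v) := by
              rw [ω.map_update_add, ω.map_update_smul]
          _ = 0 := by rw [hfirst, hzero, smul_zero, add_zero]
      · apply ih x hx f hf1
        intro i hi hil'
        rcases Nat.eq_or_lt_of_le hi with h | h
        · exact absurd ⟨h ▸ i.isLt, h ▸ hil'⟩ hmk
        · exact hf2 i h hil'
  have Sfull : ∀ x ∈ L, ∀ f : Fin k → V, (∀ i : Fin k, (i : ℕ) < l' → f i ∈ M) →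
      ω (Fin.cons x f) = 0 := by
    intro x hx f hf1
    exact S l' x hx f hf1 (fun i hi hil' => absurd (lt_of_le_of_lt hi hil') (lt_irrefl _))
  -- combine
  intro x hx f hf
  obtain ⟨w, hw, a, rfl⟩ := hmem x hx
  have e0 : Fin.cons (w + a • v) f = Function.update ((Fin.cons w f : Fin (k+1) → V)) 0 (w + a • v) := by
    ext j
    refine Fin.cases ?_ ?_ j
    · simp
    · intro j'; simp [Fin.succ_ne_zero j']
  show ω (Fin.cons (w + a • v) f) = 0
  rw [e0, ω.map_update_add, ω.map_update_smul]
  have h1 : Function.update ((Fin.cons w f : Fin (k+1) → V)) (0 : Fin (k+1)) w = Fin.cons w f := by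
    ext j
    refine Fin.cases ?_ ?_ j
    · simp
    · intro j'; simp [Fin.succ_ne_zero j']
  have h2 : Function.update ((Fin.cons w f : Fin (k+1) → V)) (0 : Fin (k+1)) v = Fin.cons v f := by
    ext j
    refine Fin.cases ?_ ?_ j
    · simp
    · intro j'; simp [Fin.succ_ne_zero j']
  rw [h1, h2]
  rw [Sfull w hw f hf, Rfull f hf, smul_zero, add_zero]

/-- in a multisymplectic vector space `(V, ω)` of degree `k+1`, every
Type-I `l`-isotropic subspace `W` is contained in a Type-I `l'`-Lagrangian subspace,
for every `l ≤ l' ≤ k`. -/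
theorem exists_typeI_lagrangian_of_isotropic
    {V : Type*} [AddCommGroup V] [Module ℝ V] [FiniteDimensional ℝ V]
    {k : ℕ} (hk : 1 ≤ k) (ω : V [⋀^Fin (k+1)]→ₗ[ℝ] ℝ)
    (hnd : ∀ v : V, (∀ u : Fin k → V, ω (Fin.cons v u) = 0) → v = 0)
    (W : Submodule ℝ V) (l l' : ℕ) (hl : 1 ≤ l) (hll' : l ≤ l') (hl'k : l' ≤ k)
    (hiso : (W : Set V) ⊆ TypeIOrth ω W l) :
    ∃ L : Submodule ℝ V, W ≤ L ∧ (L : Set V) = TypeIOrth ω L l' := by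
  classical
  have hWl' : (W : Set V) ⊆ TypeIOrth ω W l' := by
    intro w hw f hf
    exact hiso hw f (fun i hi => hf i (lt_of_lt_of_le hi hll'))
  obtain ⟨L, ⟨hWL, hLiso⟩, hmax⟩ :=
    (set_has_maximal_iff_noetherian.mpr inferInstance)
      {L : Submodule ℝ V | W ≤ L ∧ (L : Set V) ⊆ TypeIOrth ω L l'} ⟨W, le_refl W, hWl'⟩
  refine ⟨L, hWL, Set.Subset.antisymm hLiso ?_⟩
  intro v hv
  by_contra hvL
  set M := L ⊔ Submodule.span ℝ {v} with hM
  have hMiso := extend_isotropic ω l' L v hLiso hv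
  have hLM : L < M := by
    refine lt_of_le_of_ne le_sup_left (fun h => hvL ?_)
    have : v ∈ M := Submodule.mem_sup_right (Submodule.mem_span_singleton_self v)
    rwa [← h] at this
  exact hmax M ⟨le_trans hWL le_sup_left, hMiso⟩ hLM
end

section
/- Let V be an n-dimensional real vector space, let ω be a nonzero alternating n-form on V (a volume form), and set k = n − 1 ≥ 1, so that (V, ω) is a multisymplectic vector space of degree k+1 = n. Let W be a linear subspace of V with 1 ≤ dim W = l ≤ n − 1. Then W is Type-I l-Lagrangian, i.e. W = W_I^{⊥,l}; moreover W_I^{⊥,l'} = {0} for all 1 ≤ l' < l. -/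
open Module

section LinearIndependent

variable {K V : Type*} [Field K] [AddCommGroup V] [Module K V]

theorem exists_linearIndependent_extend_fin {m n : ℕ} {g : Fin m → V}
    (hg : LinearIndependent K g) (hmn : m ≤ n) (hn : n ≤ finrank K V) :
    ∃ b : Fin n → V, LinearIndependent K b ∧ ∀ i, b (Fin.castLE hmn i) = g i := by
  induction n, hmn using Nat.le_induction with
  | base => exact ⟨g, hg, fun i => rfl⟩
  | succ n hmn ih =>
    obtain ⟨b, hb, hbg⟩ := ih (by omega)
    obtain ⟨x, hx⟩ := exists_linearIndependent_snoc_of_lt_finrank hb (by omega)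
    refine ⟨Fin.snoc b x, hx, fun i => ?_⟩
    simpa [← hbg] using Fin.snoc_castSucc (α := fun _ => V) x b (Fin.castLE hmn i)

theorem exists_linearIndependent_cons_of_notMem [FiniteDimensional K V] {W : Submodule K V}
    {v : V} (hv : v ∉ W) {m : ℕ} (hm : m ≤ finrank K W) :
    ∃ w : Fin m → V, (∀ i, w i ∈ W) ∧ LinearIndependent K (Fin.cons v w : Fin (m + 1) → V) := by
  let w : Fin m → W := finBasis K W ∘ Fin.castLE hm
  have hw : LinearIndependent K w :=
    (finBasis K W).linearIndependent.comp _ (Fin.castLE_injective hm)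
  refine ⟨W.subtype ∘ w, fun i => (w i).2, linearIndependent_finCons.2
    ⟨hw.map' W.subtype W.ker_subtype, fun hspan => hv ?_⟩⟩
  exact Submodule.span_le.2 (Set.range_subset_iff.2 fun i => (w i).2) hspan

theorem exists_linearIndependent_cons [FiniteDimensional K V] {W : Submodule K V} {v : V}
    (hv : v ≠ 0) {m : ℕ} (hm : m < finrank K W) :
    ∃ w : Fin m → V, (∀ i, w i ∈ W) ∧ LinearIndependent K (Fin.cons v w : Fin (m + 1) → V) := by
  by_cases hvW : v ∈ W
  · have hv' : LinearIndependent K ![(⟨v, hvW⟩ : W)] :=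
      linearIndependent_unique_iff.2 (by simpa using hv)
    obtain ⟨b, hb, hbv⟩ := exists_linearIndependent_extend_fin hv' (by omega : 1 ≤ m + 1) hm
    have hb0 : (b 0 : V) = v := by simpa using congrArg Subtype.val (hbv 0)
    refine ⟨fun i => b i.succ, fun i => (b i.succ).2, ?_⟩
    rw [← hb0]
    exact (Fin.cons_self_tail (W.subtype ∘ b)).symm ▸ hb.map' W.subtype W.ker_subtype
  · exact exists_linearIndependent_cons_of_notMem hvW hm.le

theorem AlternatingMap.map_ne_zero_of_linearIndependent [FiniteDimensional K V] {ι : Type*}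
    [Fintype ι] {ω : V [⋀^ι]→ₗ[K] K} (hω : ω ≠ 0) (hcard : Fintype.card ι = finrank K V) {b : ι → V}
    (hb : LinearIndependent K b) : ω b ≠ 0 := by
  simpa using (ω.map_basis_ne_zero_iff (basisOfLinearIndependentOfCardEqFinrank' b hb hcard)).2 hω

end LinearIndependent

section TypeIOrth

variable {V : Type*} [AddCommGroup V] [Module ℝ V] {k : ℕ} (ω : V [⋀^Fin (k+1)]→ₗ[ℝ] ℝ)
  (W : Submodule ℝ V)

theorem zero_mem_typeIOrth (l : ℕ) : (0 : V) ∈ TypeIOrth ω W l :=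
  fun _ _ => ω.map_coord_zero 0 rfl

theorem coe_subset_typeIOrth [FiniteDimensional ℝ V] {l : ℕ} (hWl : finrank ℝ W ≤ l)
    (hlk : l ≤ k) : (W : Set V) ⊆ TypeIOrth ω W l := by
  intro v hv f hf
  apply ω.map_linearDependent
  intro hind
  have hle : l + 1 ≤ k + 1 := by omega
  have hmem (j : Fin (l + 1)) : (Fin.cons v f : Fin (k + 1) → V) (Fin.castLE hle j) ∈ W := by
    induction j using Fin.cases with
    | zero => simpa using hv
    | succ i => simpa [Fin.castLE_succ] using hf (Fin.castLE hlk i) (by simp)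
  have hW : LinearIndependent ℝ fun j => (⟨_, hmem j⟩ : W) :=
    .of_comp W.subtype (hind.comp _ (Fin.castLE_injective hle))
  have := hW.fintype_card_le_finrank
  simp only [Fintype.card_fin] at this
  omega

theorem notMem_typeIOrth_of_linearIndependent_cons [FiniteDimensional ℝ V]
    (hdim : finrank ℝ V = k + 1) (hω : ω ≠ 0) {m : ℕ} (hmk : m ≤ k) {v : V} {w : Fin m → V}
    (hwW : ∀ i, w i ∈ W) (hind : LinearIndependent ℝ (Fin.cons v w : Fin (m + 1) → V)) :
    v ∉ TypeIOrth ω W m := by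
  obtain ⟨b, hb, hbw⟩ := exists_linearIndependent_extend_fin hind (by omega) hdim.ge
  have hb0 : b 0 = v := by simpa using hbw 0
  have htail (i : Fin k) (hi : (i : ℕ) < m) : b i.succ ∈ W := by
    simpa [Fin.castLE_succ] using hbw (Fin.succ ⟨i, hi⟩) ▸ hwW ⟨i, hi⟩
  intro hv
  apply ω.map_ne_zero_of_linearIndependent hω (by simp [hdim]) hb
  simpa [← hb0] using hv (Fin.tail b) htail

end TypeIOrth

theorem typeIOrth_volume_form_general
    {V : Type*} [AddCommGroup V] [Module ℝ V] [FiniteDimensional ℝ V]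
    {k : ℕ} (hdim : finrank ℝ V = k + 1)
    (ω : V [⋀^Fin (k+1)]→ₗ[ℝ] ℝ) (hω : ω ≠ 0)
    (W : Submodule ℝ V) (l : ℕ) (hlk : l ≤ k)
    (hWl : finrank ℝ W = l) :
    (W : Set V) = TypeIOrth ω W l ∧
      ∀ l', 1 ≤ l' → l' < l → TypeIOrth ω W l' = {0} := by
  refine ⟨(coe_subset_typeIOrth ω W hWl.le hlk).antisymm fun v hv => ?_, fun l' _ hl' => ?_⟩
  · by_contra hvW
    obtain ⟨w, hwW, hind⟩ := exists_linearIndependent_cons_of_notMem hvW hWl.ge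
    exact notMem_typeIOrth_of_linearIndependent_cons ω W hdim hω hlk hwW hind hv
  · refine Set.eq_singleton_iff_unique_mem.2 ⟨zero_mem_typeIOrth ω W l', fun v hv => ?_⟩
    by_contra hv0
    obtain ⟨w, hwW, hind⟩ := exists_linearIndependent_cons hv0 (hWl ▸ hl')
    exact notMem_typeIOrth_of_linearIndependent_cons ω W hdim hω (by omega) hwW hind hv

/-- if `ω` is a volume form on an `n`-dimensional space `V`
(`n = k + 1`, `k ≥ 1`), then every subspace `W` with `1 ≤ dim W = l ≤ n − 1` is
Type-I `l`-Lagrangian, and `W_I^{⊥,l'} = {0}` for all `1 ≤ l' < l`. -/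
theorem typeIOrth_volume_form
    {V : Type*} [AddCommGroup V] [Module ℝ V] [FiniteDimensional ℝ V]
    {k : ℕ} (hk : 1 ≤ k) (hdim : finrank ℝ V = k + 1)
    (ω : V [⋀^Fin (k+1)]→ₗ[ℝ] ℝ) (hω : ω ≠ 0)
    (W : Submodule ℝ V) (l : ℕ) (hl : 1 ≤ l) (hlk : l ≤ k)
    (hWl : finrank ℝ W = l) :
    (W : Set V) = TypeIOrth ω W l ∧
      ∀ l', 1 ≤ l' → l' < l → TypeIOrth ω W l' = {0} :=
  typeIOrth_volume_form_general hdim ω hω W l hlk hWl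
end

section
/- Let (V, ω) be a multisymplectic vector space of degree k+1 and let W be a linear subspace of V. If W is Type-II l-coisotropic for some 1 ≤ l ≤ k, then W is Type-II l''-coisotropic for every l'' with 1 ≤ l'' ≤ l. -/
open Module

/-- A tuple `(v₁, …, v_l)` of vectors is Type-II `l`-orthogonal to the subspace `W`
with respect to the alternating `(k+1)`-form `ω` if
`ω (v₁, …, v_l, w, u₁, …, u_{k-l}) = 0` for all `w ∈ W` and all `u₁, …, u_{k-l} ∈ V`:
stated via all functions `f : Fin (k+1) → V` whose first `l` entries are the tuple
and whose entry in position `l` lies in `W`. -/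
def TypeIIOrth {V : Type*} [AddCommGroup V] [Module ℝ V] {k : ℕ}
    (ω : V [⋀^Fin (k+1)]→ₗ[ℝ] ℝ) (W : Submodule ℝ V) {l : ℕ} (v : Fin l → V) : Prop :=
  ∀ f : Fin (k+1) → V,
    (∀ (i : Fin (k+1)) (h : (i : ℕ) < l), f i = v ⟨(i : ℕ), h⟩) →
    (∀ i : Fin (k+1), (i : ℕ) = l → f i ∈ W) →
    ω f = 0

/-- Any linearly independent family of size `n` in a space of dimension at least `n + d`
can be extended to a linearly independent family of size `n + d`. -/
lemma extend_linearIndependent {V : Type*} [AddCommGroup V] [Module ℝ V]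
    [FiniteDimensional ℝ V] (d : ℕ) :
    ∀ (n : ℕ) (v : Fin n → V), LinearIndependent ℝ v → n + d ≤ finrank ℝ V →
      ∃ u : Fin (n + d) → V, LinearIndependent ℝ u ∧
        ∀ i : Fin n, u (Fin.castLE (Nat.le_add_right n d) i) = v i := by
  induction d with
  | zero =>
    intro n v hv _
    exact ⟨v, hv, fun i => rfl⟩
  | succ d ih =>
    intro n v hv hle
    obtain ⟨u', hu', hext⟩ := ih n v hv (le_trans (by omega) hle)
    have hne : Submodule.span ℝ (Set.range u') ≠ ⊤ := by
      intro htop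
      have h1 : finrank ℝ (Submodule.span ℝ (Set.range u')) = n + d :=
        (finrank_span_eq_card hu').trans (by simp)
      rw [htop, finrank_top] at h1
      omega
    obtain ⟨x, hx⟩ : ∃ x, x ∉ Submodule.span ℝ (Set.range u') := by
      by_contra h
      push_neg at h
      exact hne (Submodule.eq_top_iff'.mpr h)
    refine ⟨Fin.snoc u' x, linearIndependent_fin_snoc.mpr ⟨hu', hx⟩, fun i => ?_⟩
    have hcast : (Fin.castLE (Nat.le_add_right n (d + 1)) i : Fin (n + d + 1)) =
        Fin.castSucc (Fin.castLE (Nat.le_add_right n d) i) := by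
      ext; rfl
    rw [hcast, Fin.snoc_castSucc]
    exact hext i

/-- if `W` is Type-II `l`-coisotropic (every tuple of `l` vectors of `V` that
is Type-II `l`-orthogonal to `W` is linearly dependent or spans a subspace of `W`), then `W`
is Type-II `l''`-coisotropic for every `1 ≤ l'' ≤ l`. -/
theorem typeII_coisotropic_antitone
    {V : Type*} [AddCommGroup V] [Module ℝ V] [FiniteDimensional ℝ V]
    {k : ℕ} (hk : 1 ≤ k) (ω : V [⋀^Fin (k+1)]→ₗ[ℝ] ℝ)
    (hnd : ∀ v : V, (∀ f : Fin (k+1) → V, f 0 = v → ω f = 0) → v = 0)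
    (W : Submodule ℝ V) (l : ℕ) (hl : 1 ≤ l) (hlk : l ≤ k)
    (hcoiso : ∀ v : Fin l → V, TypeIIOrth ω W v →
      ¬ LinearIndependent ℝ v ∨ Submodule.span ℝ (Set.range v) ≤ W) :
    ∀ l'', 1 ≤ l'' → l'' ≤ l →
      ∀ v : Fin l'' → V, TypeIIOrth ω W v →
        ¬ LinearIndependent ℝ v ∨ Submodule.span ℝ (Set.range v) ≤ W := by
  intro l'' hl''1 hl''l v hvorth
  by_cases hli : LinearIndependent ℝ v
  swap
  · exact Or.inl hli
  right
  by_cases hdim : finrank ℝ V ≤ k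
  -- degenerate case: the whole space is zero
  · have hzero : ∀ x : V, x = 0 := by
      intro x
      apply hnd
      intro f hf
      apply ω.map_linearDependent
      intro hfli
      have := hfli.fintype_card_le_finrank
      simp at this
      omega
    refine Submodule.span_le.mpr fun x _ => ?_
    rw [hzero x]
    exact W.zero_mem
  -- main case: extend v to a linearly independent l-tuple
  · push_neg at hdim
    obtain ⟨u, hu, hext⟩ := extend_linearIndependent (l - l'') l'' v hli (by omega)
    have hcast : l'' + (l - l'') = l := by omega
    -- re-index u over Fin l
    set u' : Fin l → V := fun i => u (Fin.cast hcast.symm i) with hu'def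
    have hu'li : LinearIndependent ℝ u' := hu.comp _ (Fin.cast_injective hcast.symm)
    have hu'ext : ∀ (i : Fin l) (h : (i : ℕ) < l''), u' i = v ⟨(i : ℕ), h⟩ := by
      intro i h
      have := hext ⟨(i : ℕ), h⟩
      rw [← this]
      rfl
    -- u' is Type-II l-orthogonal to W
    have hu'orth : TypeIIOrth ω W u' := by
      intro f hf hfW
      have hl''k : l'' < k + 1 := by omega
      have hlk1 : l < k + 1 := by omega
      set a : Fin (k+1) := ⟨l'', hl''k⟩
      set b : Fin (k+1) := ⟨l, hlk1⟩
      set σ : Equiv.Perm (Fin (k+1)) := Equiv.swap a b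
      have h0 : ω (f ∘ σ) = 0 := by
        apply hvorth
        · intro i h
          have hia : i ≠ a := by
            intro he; rw [he] at h; simp [a] at h
          have hib : i ≠ b := by
            intro he; rw [he] at h; simp [b] at h; omega
          have hσ : σ i = i := Equiv.swap_apply_of_ne_of_ne hia hib
          show f (σ i) = v ⟨(i : ℕ), h⟩
          rw [hσ, hf i (by omega), hu'ext ⟨(i : ℕ), by omega⟩ h]
        · intro i h
          have hia : i = a := by ext; exact h
          have hσ : σ i = b := by rw [hia]; exact Equiv.swap_apply_left a b
          show f (σ i) ∈ W
          rw [hσ]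
          exact hfW b rfl
      have hperm := ω.map_perm f σ
      rw [h0] at hperm
      rcases Int.units_eq_one_or (Equiv.Perm.sign σ) with hs | hs <;>
        rw [hs] at hperm <;> simpa using hperm.symm
    have hspan : Submodule.span ℝ (Set.range u') ≤ W :=
      (hcoiso u' hu'orth).resolve_left (fun h => h hu'li)
    refine le_trans (Submodule.span_mono ?_) hspan
    rintro x ⟨i, rfl⟩
    exact ⟨Fin.cast hcast (Fin.castLE (Nat.le_add_right l'' (l - l'')) i), by
      rw [hu'def]; simpa using hext i⟩
end

section
/- Let (V, ω) be a multisymplectic vector space of degree k+1 and let 1 ≤ r ≤ k. Suppose ω is r-nondegenerate and W is a linear subspace of V with dim W ≥ r that is Type-II r-isotropic. Then the codimension of W in V is at least k + 1 − r. -/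
open Module

/-- if `ω` is `r`-nondegenerate and `W` is a Type-II `r`-isotropic subspace
with `dim W ≥ r`, then the codimension of `W` is at least `k + 1 − r`. -/
theorem typeII_isotropic_codim
    {V : Type*} [AddCommGroup V] [Module ℝ V] [FiniteDimensional ℝ V]
    {k : ℕ} (hk : 1 ≤ k) (ω : V [⋀^Fin (k+1)]→ₗ[ℝ] ℝ)
    (hnd : ∀ v : V, (∀ f : Fin (k+1) → V, f 0 = v → ω f = 0) → v = 0)
    (r : ℕ) (hr : 1 ≤ r) (hrk : r ≤ k)
    (hrnd : ∀ v : Fin r → V,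
      (∀ f : Fin (k+1) → V,
        (∀ (i : Fin (k+1)) (h : (i : ℕ) < r), f i = v ⟨(i : ℕ), h⟩) → ω f = 0) →
      ¬ LinearIndependent ℝ v)
    (W : Submodule ℝ V) (hWr : r ≤ finrank ℝ W)
    (hiso : ∀ w : Fin r → V, (∀ i, w i ∈ W) → TypeIIOrth ω W w) :
    k + 1 - r ≤ finrank ℝ (V ⧸ W) := by
  by_contra hlt
  push_neg at hlt
  obtain ⟨w, hw⟩ := exists_linearIndependent_of_le_finrank (R := ℝ) (M := W) hWr
  set v : Fin r → V := fun i => (w i : V) with hv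
  have hvi : LinearIndependent ℝ v := hw.map' W.subtype W.ker_subtype
  have hvW : ∀ i, v i ∈ W := fun i => (w i).2
  refine hrnd v ?_ hvi
  intro f hf
  -- the images of the last k+1-r entries in V/W are linearly dependent
  set n := k + 1 - r with hn
  have hrn : ∀ j : Fin n, r + (j : ℕ) < k + 1 := fun j => by
    have := j.isLt; omega
  set emb : Fin n → Fin (k+1) := fun j => ⟨r + j, hrn j⟩ with hemb
  set g : Fin n → V ⧸ W := fun j => Submodule.Quotient.mk (f (emb j)) with hg
  have hgdep : ¬ LinearIndependent ℝ g := by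
    intro h
    have := h.fintype_card_le_finrank
    simp only [Fintype.card_fin] at this
    omega
  rw [Fintype.not_linearIndependent_iff] at hgdep
  obtain ⟨c, hc, j₀, hj₀⟩ := hgdep
  set s : V := ∑ j, c j • f (emb j) with hs
  have hsW : s ∈ W := by
    rw [← Submodule.Quotient.mk_eq_zero W]
    have : (Submodule.Quotient.mk s : V ⧸ W) = W.mkQ s := rfl
    rw [this, hs, map_sum]
    simp only [map_smul]
    exact hc
  set i₀ : Fin (k+1) := emb j₀ with hi₀
  -- the linear map in slot i₀
  set L : V →ₗ[ℝ] ℝ := ω.toMultilinearMap.toLinearMap f i₀ with hL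
  have hLapp : ∀ x, L x = ω (Function.update f i₀ x) := fun x => rfl
  -- key decomposition
  have hdecomp : c j₀ • f i₀ = s - ∑ j ∈ Finset.univ.erase j₀, c j • f (emb j) := by
    rw [hs, ← Finset.add_sum_erase _ _ (Finset.mem_univ j₀)]
    abel
  -- each term with repeated entry vanishes
  have hrep : ∀ j ∈ Finset.univ.erase j₀, L (f (emb j)) = 0 := by
    intro j hj
    have hjne : j ≠ j₀ := Finset.ne_of_mem_erase hj
    have hne : emb j ≠ i₀ := by
      simp only [hi₀, hemb, ne_eq, Fin.mk.injEq]
      intro h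
      exact hjne (Fin.ext (by omega))
    rw [hLapp]
    refine ω.map_eq_zero_of_eq _ (i := emb j) (j := i₀) ?_ hne
    rw [Function.update_of_ne hne, Function.update_self]
  -- the term with s vanishes by isotropy
  have hsterm : L s = 0 := by
    have hir : r < k + 1 := by omega
    set ir : Fin (k+1) := ⟨r, hir⟩ with hir'
    set σ : Equiv.Perm (Fin (k+1)) := Equiv.swap ir i₀ with hσ
    have hperm := ω.map_perm (Function.update f i₀ s) σ
    have hzero : ω (Function.update f i₀ s ∘ σ) = 0 := by
      refine hiso v hvW _ ?_ ?_
      · intro i hi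
        have hi1 : i ≠ ir := by
          simp only [hir', ne_eq, Fin.ext_iff]; omega
        have hi2 : i ≠ i₀ := by
          simp only [hi₀, hemb, ne_eq, Fin.ext_iff]; omega
        have hswap : σ i = i := Equiv.swap_apply_of_ne_of_ne hi1 hi2
        simp only [Function.comp_apply]
        rw [hswap, Function.update_of_ne hi2]
        exact hf i hi
      · intro i hi
        have : i = ir := Fin.ext hi
        subst this
        have hswap : σ ir = i₀ := Equiv.swap_apply_left _ _
        simp only [Function.comp_apply]
        rw [hswap, Function.update_self]
        exact hsW
    rw [hzero] at hperm
    rw [hLapp]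
    rcases Int.units_eq_one_or (Equiv.Perm.sign σ) with h1 | h1 <;> rw [h1] at hperm
    · simpa using hperm.symm
    · have : -(ω (Function.update f i₀ s)) = 0 := by simpa using hperm.symm
      linarith [this]
  -- conclude
  have key : c j₀ • ω f = 0 := by
    have : c j₀ • ω f = L (c j₀ • f i₀) := by
      rw [map_smul, hLapp, Function.update_eq_self]
    rw [this, hdecomp, map_sub, hsterm, map_sum]
    simp only [map_smul, smul_eq_mul]
    rw [Finset.sum_congr rfl (fun j hj => by rw [hrep j hj])]
    simp
  rcases smul_eq_zero.mp key with h | h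
  · exact absurd h hj₀
  · exact h
end

section
/- Let V be an n-dimensional real vector space, let ω be a nonzero alternating n-form on V (a volume form), and set k = n − 1 ≥ 1. Let W be a linear subspace of V with 1 ≤ dim W = l ≤ n − 1. Then W is Type-II l-Lagrangian: a tuple (v₁, …, v_l) of vectors of V is Type-II l-orthogonal to W if and only if v₁, …, v_l are linearly dependent or span{v₁, …, v_l} = W. Moreover, for every 1 ≤ l' < l, every tuple (v₁, …, v_{l'}) that is Type-II l'-orthogonal to W is linearly dependent (W_{II}^{⊥,l'} = {0}). -/
open Module

/-- Extension of a linearly independent tuple to a full-length independent tuple. -/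
theorem aux_extend {V : Type*} [AddCommGroup V] [Module ℝ V] [FiniteDimensional ℝ V]
    {n m : ℕ} (hdim : finrank ℝ V = n) (hm : m ≤ n) (g : Fin m → V)
    (hg : LinearIndependent ℝ g) :
    ∃ f : Fin n → V, LinearIndependent ℝ f ∧ ∀ j : Fin m, f (Fin.castLE hm j) = g j := by
  set S := Submodule.span ℝ (Set.range g) with hS
  obtain ⟨T, hT⟩ := Submodule.exists_isCompl S
  have hST : finrank ℝ S + finrank ℝ T = n := by
    rw [Submodule.finrank_add_eq_of_isCompl hT, hdim]
  have hSm : finrank ℝ S = m := by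
    rw [hS, finrank_span_eq_card hg, Fintype.card_fin]
  have hTn : finrank ℝ T = n - m := by omega
  let b : Basis (Fin (n - m)) ℝ T := finBasisOfFinrankEq ℝ T hTn
  have hb : LinearIndependent ℝ ((Subtype.val : T → V) ∘ b) :=
    b.linearIndependent.map' T.subtype (Submodule.ker_subtype T)
  have hbr : Submodule.span ℝ (Set.range ((Subtype.val : T → V) ∘ b)) ≤ T := by
    rw [Submodule.span_le]
    rintro x ⟨i, rfl⟩
    exact (b i).2
  have hsum : LinearIndependent ℝ (Sum.elim g ((Subtype.val : T → V) ∘ b)) := by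
    rw [linearIndependent_sum]
    exact ⟨hg, hb, Disjoint.mono_right hbr hT.disjoint⟩
  have hcast : n = m + (n - m) := by omega
  refine ⟨(Sum.elim g ((Subtype.val : T → V) ∘ b)) ∘ finSumFinEquiv.symm ∘ Fin.cast hcast,
    hsum.comp _ ((finSumFinEquiv.symm.injective).comp fun a b h => by
      simpa [Fin.ext_iff] using h), fun j => ?_⟩
  have : Fin.cast hcast (Fin.castLE hm j) = Fin.castAdd (n - m) j := by
    ext; rfl
  simp [this, finSumFinEquiv_symm_apply_castAdd]

/-- A nonzero top alternating form is nonzero on any linearly independent full tuple. -/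
theorem aux_ne_zero {V : Type*} [AddCommGroup V] [Module ℝ V] [FiniteDimensional ℝ V]
    {n : ℕ} (hn : 1 ≤ n) (hdim : finrank ℝ V = n)
    (ω : V [⋀^Fin n]→ₗ[ℝ] ℝ) (hω : ω ≠ 0) (f : Fin n → V)
    (hf : LinearIndependent ℝ f) : ω f ≠ 0 := by
  have : Nonempty (Fin n) := ⟨⟨0, hn⟩⟩
  intro h0
  let b := basisOfLinearIndependentOfCardEqFinrank hf (by simp [hdim])
  have hbf : ⇑b = f := coe_basisOfLinearIndependentOfCardEqFinrank _ _
  apply hω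
  have := ω.eq_smul_basis_det b
  rw [hbf, h0, zero_smul] at this
  exact this

/-- Key step: a linearly independent tuple Type-II orthogonal to `W` spans a space
containing `W`. -/
theorem aux_key {V : Type*} [AddCommGroup V] [Module ℝ V] [FiniteDimensional ℝ V]
    {k : ℕ} (hdim : finrank ℝ V = k + 1)
    (ω : V [⋀^Fin (k+1)]→ₗ[ℝ] ℝ) (hω : ω ≠ 0)
    (W : Submodule ℝ V) {m : ℕ} (hm : m ≤ k) (v : Fin m → V)
    (hv : LinearIndependent ℝ v) (ho : TypeIIOrth ω W v) :
    W ≤ Submodule.span ℝ (Set.range v) := by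
  intro w hw
  by_contra hns
  have hg : LinearIndependent ℝ (Fin.snoc v w : Fin (m+1) → V) :=
    linearIndependent_fin_snoc.mpr ⟨hv, hns⟩
  have hm1 : m + 1 ≤ k + 1 := by omega
  obtain ⟨f, hf, hfe⟩ := aux_extend hdim hm1 _ hg
  have h0 : ω f = 0 := by
    apply ho f
    · intro i hi
      have e1 : f i = (Fin.snoc v w : Fin (m+1) → V) ⟨(i : ℕ), by omega⟩ := by
        rw [← hfe ⟨(i : ℕ), by omega⟩]
        exact congrArg f (Fin.ext rfl).symm
      have h2 : (⟨(i : ℕ), by omega⟩ : Fin (m+1)) =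
          Fin.castSucc ⟨(i : ℕ), hi⟩ := by ext; rfl
      rw [e1, h2, Fin.snoc_castSucc]
    · intro i hi
      have e1 : f i = (Fin.snoc v w : Fin (m+1) → V) ⟨m, by omega⟩ := by
        rw [← hfe ⟨m, by omega⟩]
        exact congrArg f (show Fin.castLE hm1 ⟨m, by omega⟩ = i by ext; exact hi.symm).symm
      have h2 : (⟨m, by omega⟩ : Fin (m+1)) = Fin.last m := rfl
      rw [e1, h2, Fin.snoc_last]
      exact hw
  exact aux_ne_zero (by omega) hdim ω hω f hf h0

/-- if `ω` is a volume form on an `n`-dimensional space `V` (`n = k + 1`,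
`k ≥ 1`) and `W` is a subspace with `1 ≤ dim W = l ≤ n − 1`, then `W` is Type-II
`l`-Lagrangian: a tuple `(v₁, …, v_l)` is Type-II `l`-orthogonal to `W` iff it is
linearly dependent or spans exactly `W`; moreover for `1 ≤ l' < l` every tuple that is
Type-II `l'`-orthogonal to `W` is linearly dependent (`W_{II}^{⊥,l'} = {0}`). -/
theorem typeIIOrth_volume_form
    {V : Type*} [AddCommGroup V] [Module ℝ V] [FiniteDimensional ℝ V]
    {k : ℕ} (hk : 1 ≤ k) (hdim : finrank ℝ V = k + 1)
    (ω : V [⋀^Fin (k+1)]→ₗ[ℝ] ℝ) (hω : ω ≠ 0)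
    (W : Submodule ℝ V) (l : ℕ) (hl : 1 ≤ l) (hlk : l ≤ k)
    (hWl : finrank ℝ W = l) :
    (∀ v : Fin l → V, TypeIIOrth ω W v ↔
      (¬ LinearIndependent ℝ v ∨ Submodule.span ℝ (Set.range v) = W)) ∧
    ∀ l', 1 ≤ l' → l' < l →
      ∀ v : Fin l' → V, TypeIIOrth ω W v → ¬ LinearIndependent ℝ v := by
  constructor
  · intro v
    constructor
    · intro ho
      by_cases hv : LinearIndependent ℝ v
      · right
        have hle : W ≤ Submodule.span ℝ (Set.range v) := aux_key hdim ω hω W hlk v hv ho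
        have hfr : finrank ℝ (Submodule.span ℝ (Set.range v)) ≤ finrank ℝ W := by
          rw [hWl, finrank_span_eq_card hv, Fintype.card_fin]
        exact (Submodule.eq_of_le_of_finrank_le hle hfr).symm
      · exact Or.inl hv
    · intro h f hf hfW
      by_cases hfind : LinearIndependent ℝ f
      · exfalso
        rcases h with h | h
        · apply h
          have : v = f ∘ Fin.castLE (by omega : l ≤ k + 1) := by
            funext j
            exact (hf (Fin.castLE (by omega) j) j.2).symm ▸ rfl
          rw [this]
          exact hfind.comp _ (Fin.castLE_injective _)
        · set i₀ : Fin (k+1) := ⟨l, by omega⟩ with hi₀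
          set s : Set (Fin (k+1)) := {i | (i : ℕ) < l} with hs
          have hmem : f i₀ ∈ Submodule.span ℝ (f '' s) := by
            have h1 : f i₀ ∈ W := hfW i₀ rfl
            rw [← h] at h1
            refine Submodule.span_mono ?_ h1
            rintro x ⟨j, rfl⟩
            exact ⟨Fin.castLE (by omega : l ≤ k + 1) j, j.2,
              (hf (Fin.castLE (by omega) j) j.2).trans (congrArg v (Fin.ext rfl))⟩
          exact hfind.notMem_span_image (by simp [hs, hi₀]) hmem
      · exact ω.map_linearDependent f hfind
  · intro l' hl'1 hl'l v ho hv
    have hle : W ≤ Submodule.span ℝ (Set.range v) :=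
      aux_key hdim ω hω W (by omega) v hv ho
    have : l ≤ l' := by
      have h1 := Submodule.finrank_mono hle
      rw [hWl, finrank_span_eq_card hv, Fintype.card_fin] at h1
      exact h1
    omega
end

section
/- Let W be a linear subspace of ℝ⁷ with dim W ≥ 2. Then W_I^{⊥,1} = {0} with respect to the G₂ 3-form φ₀; in particular W is 1-coisotropic. -/
open Module

/-- The exterior 3-form `dxᵃ ∧ dxᵇ ∧ dxᶜ` on `ℝ⁷`. -/
noncomputable def dx3 (a b c : Fin 7) : (Fin 7 → ℝ) [⋀^Fin 3]→ₗ[ℝ] ℝ :=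
  (Matrix.detRowAlternating : (Fin 3 → ℝ) [⋀^Fin 3]→ₗ[ℝ] ℝ).compLinearMap
    (LinearMap.funLeft ℝ ℝ ![a, b, c])

/-- The standard `G₂` 3-form
`φ₀ = dx¹²³ + dx¹⁴⁵ + dx¹⁶⁷ + dx²⁴⁶ − dx²⁵⁷ − dx³⁴⁷ − dx³⁵⁶` on `ℝ⁷`
(with indices shifted to `0, …, 6`). -/
noncomputable def phi0 : (Fin 7 → ℝ) [⋀^Fin 3]→ₗ[ℝ] ℝ :=
  dx3 0 1 2 + dx3 0 3 4 + dx3 0 5 6 + dx3 1 3 5 - dx3 1 4 6 - dx3 2 3 6 - dx3 2 4 5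

/-- The Type-I 1st orthogonal complement of `W ⊆ ℝ⁷` with respect to `φ₀`. -/
def WIperp1 (W : Submodule ℝ (Fin 7 → ℝ)) : Set (Fin 7 → ℝ) :=
  {v | ∀ w ∈ W, ∀ u : Fin 7 → ℝ, phi0 ![v, w, u] = 0}

/-- The Type-I 2nd orthogonal complement of `W ⊆ ℝ⁷` with respect to `φ₀`. -/
def WIperp2 (W : Submodule ℝ (Fin 7 → ℝ)) : Set (Fin 7 → ℝ) :=
  {v | ∀ w₁ ∈ W, ∀ w₂ ∈ W, phi0 ![v, w₁, w₂] = 0}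

lemma dx3_apply (a b c : Fin 7) (v w u : Fin 7 → ℝ) :
    dx3 a b c ![v, w, u] =
      v a * (w b * u c - w c * u b) - v b * (w a * u c - w c * u a)
        + v c * (w a * u b - w b * u a) := by
  show Matrix.det (Matrix.of fun i => (LinearMap.funLeft ℝ ℝ ![a, b, c]) (![v, w, u] i)) = _
  simp [Matrix.det_fin_three, LinearMap.funLeft]
  ring

lemma phi0_apply (v w u : Fin 7 → ℝ) :
    phi0 ![v, w, u] = u 0 * v 1 * w 2 - u 0 * v 2 * w 1 + u 0 * v 3 * w 4 - u 0 * v 4 * w 3 + u 0 * v 5 * w 6 - u 0 * v 6 * w 5 - u 1 * v 0 * w 2 + u 1 * v 2 * w 0 + u 1 * v 3 * w 5 - u 1 * v 4 * w 6 - u 1 * v 5 * w 3 + u 1 * v 6 * w 4 + u 2 * v 0 * w 1 - u 2 * v 1 * w 0 - u 2 * v 3 * w 6 - u 2 * v 4 * w 5 + u 2 * v 5 * w 4 + u 2 * v 6 * w 3 - u 3 * v 0 * w 4 - u 3 * v 1 * w 5 + u 3 * v 2 * w 6 + u 3 * v 4 * w 0 + u 3 * v 5 * w 1 - u 3 * v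 6 * w 2 + u 4 * v 0 * w 3 + u 4 * v 1 * w 6 + u 4 * v 2 * w 5 - u 4 * v 3 * w 0 - u 4 * v 5 * w 2 - u 4 * v 6 * w 1 - u 5 * v 0 * w 6 + u 5 * v 1 * w 3 - u 5 * v 2 * w 4 - u 5 * v 3 * w 1 + u 5 * v 4 * w 2 + u 5 * v 6 * w 0 + u 6 * v 0 * w 5 - u 6 * v 1 * w 4 - u 6 * v 2 * w 3 + u 6 * v 3 * w 2 + u 6 * v 4 * w 1 - u 6 * v 5 * w 0 := by
  show (dx3 0 1 2 + dx3 0 3 4 + dx3 0 5 6 + dx3 1 3 5 - dx3 1 4 6 - dx3 2 3 6 - dx3 2 4 5)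
      ![v, w, u] = _
  simp only [AlternatingMap.add_apply, AlternatingMap.sub_apply, dx3_apply]
  ring

lemma key (v w : Fin 7 → ℝ) (h : ∀ u : Fin 7 → ℝ, phi0 ![v, w, u] = 0) :
    (∑ i, v i * v i) • w = (∑ i, v i * w i) • v := by
  have h0 : v 1 * w 2 - v 2 * w 1 + v 3 * w 4 - v 4 * w 3 + v 5 * w 6 - v 6 * w 5 = 0 := by
    have := h (fun i => if i = (0 : Fin 7) then (1 : ℝ) else 0)
    rw [phi0_apply] at this
    simp (config := { decide := true }) at this
    linear_combination this
  have h1 : -v 0 * w 2 + v 2 * w 0 + v 3 * w 5 - v 4 * w 6 - v 5 * w 3 + v 6 * w 4 = 0 := by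
    have := h (fun i => if i = (1 : Fin 7) then (1 : ℝ) else 0)
    rw [phi0_apply] at this
    simp (config := { decide := true }) at this
    linear_combination this
  have h2 : v 0 * w 1 - v 1 * w 0 - v 3 * w 6 - v 4 * w 5 + v 5 * w 4 + v 6 * w 3 = 0 := by
    have := h (fun i => if i = (2 : Fin 7) then (1 : ℝ) else 0)
    rw [phi0_apply] at this
    simp (config := { decide := true }) at this
    linear_combination this
  have h3 : -v 0 * w 4 - v 1 * w 5 + v 2 * w 6 + v 4 * w 0 + v 5 * w 1 - v 6 * w 2 = 0 := by
    have := h (fun i => if i = (3 : Fin 7) then (1 : ℝ) else 0)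
    rw [phi0_apply] at this
    simp (config := { decide := true }) at this
    linear_combination this
  have h4 : v 0 * w 3 + v 1 * w 6 + v 2 * w 5 - v 3 * w 0 - v 5 * w 2 - v 6 * w 1 = 0 := by
    have := h (fun i => if i = (4 : Fin 7) then (1 : ℝ) else 0)
    rw [phi0_apply] at this
    simp (config := { decide := true }) at this
    linear_combination this
  have h5 : -v 0 * w 6 + v 1 * w 3 - v 2 * w 4 - v 3 * w 1 + v 4 * w 2 + v 6 * w 0 = 0 := by
    have := h (fun i => if i = (5 : Fin 7) then (1 : ℝ) else 0)
    rw [phi0_apply] at this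
    simp (config := { decide := true }) at this
    linear_combination this
  have h6 : v 0 * w 5 - v 1 * w 4 - v 2 * w 3 + v 3 * w 2 + v 4 * w 1 - v 5 * w 0 = 0 := by
    have := h (fun i => if i = (6 : Fin 7) then (1 : ℝ) else 0)
    rw [phi0_apply] at this
    simp (config := { decide := true }) at this
    linear_combination this
  have g0 : (∑ i, v i * v i) * w 0 = (∑ i, v i * w i) * v 0 := by
    simp only [Fin.sum_univ_seven]
    linear_combination (v 2) * h1 + (-v 1) * h2 + (v 4) * h3 + (-v 3) * h4 + (v 6) * h5 + (-v 5) * h6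
  have g1 : (∑ i, v i * v i) * w 1 = (∑ i, v i * w i) * v 1 := by
    simp only [Fin.sum_univ_seven]
    linear_combination (-v 2) * h0 + (v 0) * h2 + (v 5) * h3 + (-v 6) * h4 + (-v 3) * h5 + (v 4) * h6
  have g2 : (∑ i, v i * v i) * w 2 = (∑ i, v i * w i) * v 2 := by
    simp only [Fin.sum_univ_seven]
    linear_combination (v 1) * h0 + (-v 0) * h1 + (-v 6) * h3 + (-v 5) * h4 + (v 4) * h5 + (v 3) * h6
  have g3 : (∑ i, v i * v i) * w 3 = (∑ i, v i * w i) * v 3 := by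
    simp only [Fin.sum_univ_seven]
    linear_combination (-v 4) * h0 + (-v 5) * h1 + (v 6) * h2 + (v 0) * h4 + (v 1) * h5 + (-v 2) * h6
  have g4 : (∑ i, v i * v i) * w 4 = (∑ i, v i * w i) * v 4 := by
    simp only [Fin.sum_univ_seven]
    linear_combination (v 3) * h0 + (v 6) * h1 + (v 5) * h2 + (-v 0) * h3 + (-v 2) * h5 + (-v 1) * h6
  have g5 : (∑ i, v i * v i) * w 5 = (∑ i, v i * w i) * v 5 := by
    simp only [Fin.sum_univ_seven]
    linear_combination (-v 6) * h0 + (v 3) * h1 + (-v 4) * h2 + (-v 1) * h3 + (v 2) * h4 + (v 0) * h6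
  have g6 : (∑ i, v i * v i) * w 6 = (∑ i, v i * w i) * v 6 := by
    simp only [Fin.sum_univ_seven]
    linear_combination (v 5) * h0 + (-v 4) * h1 + (-v 3) * h2 + (v 2) * h3 + (v 1) * h4 + (-v 0) * h5
  funext j
  simp only [Pi.smul_apply, smul_eq_mul]
  fin_cases j
  exacts [g0, g1, g2, g3, g4, g5, g6]


/-- every subspace `W` of `ℝ⁷` with `dim W ≥ 2` satisfies `W_I^{⊥,1} = {0}`
with respect to the `G₂` 3-form `φ₀`; in particular `W` is 1-coisotropic. -/
theorem g2_dim_ge_two_coisotropic (W : Submodule ℝ (Fin 7 → ℝ))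
    (hW : 2 ≤ Module.finrank ℝ W) :
    WIperp1 W = {0} ∧ WIperp1 W ⊆ (W : Set (Fin 7 → ℝ)) := by
  have hzero : WIperp1 W = {0} := by
    ext v
    simp only [Set.mem_singleton_iff]
    constructor
    · intro hv
      by_contra hvne
      have hspan : W ≤ Submodule.span ℝ {v} := by
        intro w hw
        rw [Submodule.mem_span_singleton]
        have hk := key v w (hv w hw)
        have hS : (∑ i, v i * v i) ≠ 0 := by
          intro hS0
          apply hvne
          funext i
          have hnn : ∀ i ∈ Finset.univ, 0 ≤ v i * v i := fun i _ => mul_self_nonneg _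
          have := (Finset.sum_eq_zero_iff_of_nonneg hnn).1 hS0 i (Finset.mem_univ i)
          exact mul_self_eq_zero.1 this
        refine ⟨(∑ i, v i * w i) / (∑ i, v i * v i), ?_⟩
        have : ((∑ i, v i * v i)⁻¹ * (∑ i, v i * w i)) • v
            = (∑ i, v i * v i)⁻¹ • ((∑ i, v i * v i) • w) := by
          rw [mul_smul, ← hk]
        rw [div_eq_inv_mul, this, ← mul_smul, inv_mul_cancel₀ hS, one_smul]
      have h1 : Module.finrank ℝ W ≤ Module.finrank ℝ (Submodule.span ℝ {v}) :=
        Submodule.finrank_mono hspan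
      rw [finrank_span_singleton hvne] at h1
      omega
    · rintro rfl
      intro w _ u
      rw [phi0_apply]
      simp
  refine ⟨hzero, ?_⟩
  rw [hzero]
  intro x hx
  simp only [Set.mem_singleton_iff] at hx
  subst hx
  exact Submodule.zero_mem W
end

section
/- Let W be a 5-dimensional linear subspace of ℝ⁷. Then W contains a 3-dimensional linear subspace that is closed under the cross product determined by φ₀, and moreover W_I^{⊥,2} = {0}; in particular W is Type-I 2-coisotropic. -/
open Module

/-- `U` is closed under the cross product determined by `φ₀`: for all `u, v ∈ U`
and every `z` orthogonal to `U` (w.r.t. the standard inner product),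
`φ₀ (u, v, z) = 0`, i.e. `u × v ∈ U`. -/
def CrossClosed (U : Submodule ℝ (Fin 7 → ℝ)) : Prop :=
  ∀ u ∈ U, ∀ v ∈ U, ∀ z : Fin 7 → ℝ, (∀ x ∈ U, ∑ i, z i * x i = 0) → phi0 ![u, v, z] = 0

/-!
Let `a, b` span the orthogonal complement of `W`. The vector `c = a × b` is orthogonal to `a`
and `b`, so it lies in `W`. The identity `x × (x × y) = ⟨x, y⟩ x - |x|² y` shows that `c × ·`
maps `span {a, b}` into itself; being skew-adjoint, it then also maps `W` into itself. Hence for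
any `u ∈ W` independent of `c`, the associative 3-plane `span {c, u, c × u}`, which is closed
under `×` by the same identity, lies in `W`.

If `v ≠ 0` lies in `W_I^{⊥,2}`, then `v × ·` maps `W` into its 2-dimensional orthogonal
complement with kernel inside `ℝ v`, forcing `dim W ≤ 3`.
-/

open Matrix Submodule

theorem LinearMap.BilinForm.mem_orthogonal_span_iff {R M : Type*} [CommSemiring R]
    [AddCommMonoid M] [Module R M] {B : LinearMap.BilinForm R M} {s : Set M} {x : M} :
    x ∈ B.orthogonal (span R s) ↔ ∀ y ∈ s, B y x = 0 :=
  span_le (p := LinearMap.ker (B.flip x))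

theorem Submodule.exists_linearIndependent_pair_span_eq {K V : Type*} [DivisionRing K]
    [AddCommGroup V] [Module K V] (P : Submodule K V) [FiniteDimensional K P]
    (hP : finrank K P = 2) :
    ∃ a b : V, LinearIndependent K ![a, b] ∧ span K {a, b} = P := by
  obtain ⟨f, hf⟩ := exists_linearIndependent_of_le_finrank (R := K) (M := P) hP.ge
  have hab : LinearIndependent K ![(f 0 : V), f 1] := by
    have hfV := hf.map' P.subtype P.ker_subtype
    rwa [show P.subtype ∘ f = ![(f 0 : V), f 1] by ext i; fin_cases i <;> rfl] at hfV
  refine ⟨f 0, f 1, hab, eq_of_le_of_finrank_eq ?_ ?_⟩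
  · exact span_le.2 (Set.insert_subset (f 0).2 (Set.singleton_subset_iff.2 (f 1).2))
  · rw [← Matrix.range_cons_cons_empty _ _ ![], finrank_span_eq_card hab, hP, Fintype.card_fin]

namespace Matrix

variable {n K : Type*} [Fintype n]

theorem dotProductBilin_isRefl [CommSemiring K] :
    LinearMap.BilinForm.IsRefl (dotProductBilin K K : LinearMap.BilinForm K (n → K)) :=
  fun x y h => by rwa [dotProductBilin_apply_apply, dotProduct_comm] at h

theorem dotProductBilin_nondegenerate [CommRing K] [LinearOrder K] [IsStrictOrderedRing K] :
    LinearMap.BilinForm.Nondegenerate (dotProductBilin K K : LinearMap.BilinForm K (n → K)) :=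
  ⟨fun x hx => dotProduct_self_eq_zero.1 (hx x), fun x hx => dotProduct_self_eq_zero.1 (hx x)⟩

end Matrix

namespace G2

/-- The cross product of `φ₀`: `cross u v ⬝ᵥ w = φ₀ (u, v, w)` (`phi0_apply`). -/
def cross : (Fin 7 → ℝ) →ₗ[ℝ] (Fin 7 → ℝ) →ₗ[ℝ] (Fin 7 → ℝ) :=
  LinearMap.mk₂ ℝ
    (fun u v => ![u 1 * v 2 - u 2 * v 1 + u 3 * v 4 - u 4 * v 3 + u 5 * v 6 - u 6 * v 5,
      -(u 0 * v 2) + u 2 * v 0 + u 3 * v 5 - u 4 * v 6 - u 5 * v 3 + u 6 * v 4,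
      u 0 * v 1 - u 1 * v 0 - u 3 * v 6 - u 4 * v 5 + u 5 * v 4 + u 6 * v 3,
      -(u 0 * v 4) - u 1 * v 5 + u 2 * v 6 + u 4 * v 0 + u 5 * v 1 - u 6 * v 2,
      u 0 * v 3 + u 1 * v 6 + u 2 * v 5 - u 3 * v 0 - u 5 * v 2 - u 6 * v 1,
      -(u 0 * v 6) + u 1 * v 3 - u 2 * v 4 - u 3 * v 1 + u 4 * v 2 + u 6 * v 0,
      u 0 * v 5 - u 1 * v 4 - u 2 * v 3 + u 3 * v 2 + u 4 * v 1 - u 5 * v 0])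
    (fun _ _ _ => by
      ext i
      fin_cases i <;>
        simp only [Pi.add_apply, Fin.isValue, Fin.zero_eta, Fin.mk_one, Fin.reduceFinMk,
          cons_val_zero, cons_val_one, cons_val] <;>
        ring)
    (fun _ _ _ => by
      ext i
      fin_cases i <;>
        simp only [Pi.smul_apply, smul_eq_mul, Fin.isValue, Fin.zero_eta, Fin.mk_one,
          Fin.reduceFinMk, cons_val_zero, cons_val_one, cons_val] <;>
        ring)
    (fun _ _ _ => by
      ext i
      fin_cases i <;>
        simp only [Pi.add_apply, Fin.isValue, Fin.zero_eta, Fin.mk_one, Fin.reduceFinMk,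
          cons_val_zero, cons_val_one, cons_val] <;>
        ring)
    (fun _ _ _ => by
      ext i
      fin_cases i <;>
        simp only [Pi.smul_apply, smul_eq_mul, Fin.isValue, Fin.zero_eta, Fin.mk_one,
          Fin.reduceFinMk, cons_val_zero, cons_val_one, cons_val] <;>
        ring)

theorem dx3_apply (a b c : Fin 7) (u v w : Fin 7 → ℝ) :
    dx3 a b c ![u, v, w] =
      u a * (v b * w c - v c * w b) - u b * (v a * w c - v c * w a)
        + u c * (v a * w b - v b * w a) := by
  change Matrix.det (Matrix.of fun i j => ![u, v, w] i (![a, b, c] j)) = _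
  simp only [det_fin_three, of_apply, cons_val', cons_val_fin_one, Fin.isValue, cons_val_zero,
    cons_val_one, cons_val]
  ring

theorem phi0_apply (u v w : Fin 7 → ℝ) : phi0 ![u, v, w] = cross u v ⬝ᵥ w := by
  simp only [phi0, AlternatingMap.sub_apply, AlternatingMap.add_apply, dx3_apply, cross,
    LinearMap.mk₂_apply, dotProduct, Fin.sum_univ_seven, Fin.isValue, cons_val_zero, cons_val_one,
    cons_val]
  ring

theorem cross_cross_self_left (u v : Fin 7 → ℝ) :
    cross u (cross u v) = (u ⬝ᵥ v) • u - (u ⬝ᵥ u) • v := by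
  ext i
  fin_cases i <;>
    simp only [cross, LinearMap.mk₂_apply, dotProduct, Fin.sum_univ_seven, Pi.sub_apply,
      Pi.smul_apply, smul_eq_mul, Fin.isValue, Fin.zero_eta, Fin.mk_one, Fin.reduceFinMk,
      cons_val_zero, cons_val_one, cons_val] <;>
    ring

theorem cross_dotProduct_self_left (u v : Fin 7 → ℝ) : cross u v ⬝ᵥ u = 0 := by
  rw [← phi0_apply]
  exact phi0.map_eq_zero_of_eq _ (i := 0) (j := 2) rfl (by decide)

theorem cross_dotProduct_self_right (u v : Fin 7 → ℝ) : cross u v ⬝ᵥ v = 0 := by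
  rw [← phi0_apply]
  exact phi0.map_eq_zero_of_eq _ (i := 1) (j := 2) rfl (by decide)

theorem cross_dotProduct_swap (u v w : Fin 7 → ℝ) : cross u v ⬝ᵥ w = -(cross u w ⬝ᵥ v) := by
  rw [← phi0_apply, ← phi0_apply,
    ← phi0.map_swap (v := ![u, w, v]) (i := 1) (j := 2) (by decide)]
  congr 1
  ext i; fin_cases i <;> rfl

theorem cross_anticomm (u v : Fin 7 → ℝ) : cross v u = -cross u v := by
  refine dotProduct_eq _ _ fun w => ?_
  rw [neg_dotProduct, ← phi0_apply, ← phi0_apply,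
    ← phi0.map_swap (v := ![u, v, w]) (i := 0) (j := 1) (by decide)]
  congr 1
  ext i; fin_cases i <;> rfl

theorem cross_self (u : Fin 7 → ℝ) : cross u u = 0 := by
  refine dotProduct_eq_zero_iff.1 fun w => ?_
  rw [← phi0_apply]
  exact phi0.map_eq_zero_of_eq _ (i := 0) (j := 1) rfl (by decide)

theorem cross_cross_self_right (u v : Fin 7 → ℝ) :
    cross v (cross u v) = (v ⬝ᵥ v) • u - (v ⬝ᵥ u) • v := by
  rw [cross_anticomm v u, map_neg, cross_cross_self_left, neg_sub]

theorem ker_cross_le_span_singleton {v : Fin 7 → ℝ} (hv : v ≠ 0) :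
    LinearMap.ker (cross v) ≤ span ℝ {v} := by
  intro w hw
  have hvv : v ⬝ᵥ v ≠ 0 := mt dotProduct_self_eq_zero.1 hv
  have h : (v ⬝ᵥ w) • v = (v ⬝ᵥ v) • w := by
    rw [← sub_eq_zero, ← cross_cross_self_left, LinearMap.mem_ker.1 hw, map_zero]
  refine mem_span_singleton.2 ⟨(v ⬝ᵥ v)⁻¹ * (v ⬝ᵥ w), ?_⟩
  rw [mul_smul, h, inv_smul_smul₀ hvv]

theorem cross_ne_zero_of_linearIndependent {x y : Fin 7 → ℝ}
    (h : LinearIndependent ℝ ![x, y]) : cross x y ≠ 0 := by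
  intro hxy
  have hx : x ≠ 0 := by simpa using h.ne_zero 0
  obtain ⟨r, hr⟩ := mem_span_singleton.1 (ker_cross_le_span_singleton hx hxy)
  exact (LinearIndependent.pair_iff' hx).1 h r hr

abbrev dotForm : LinearMap.BilinForm ℝ (Fin 7 → ℝ) := dotProductBilin ℝ ℝ

theorem orthogonal_le_comap_cross {P : Submodule ℝ (Fin 7 → ℝ)} {c : Fin 7 → ℝ}
    (hP : P ≤ P.comap (cross c)) :
    dotForm.orthogonal P ≤ (dotForm.orthogonal P).comap (cross c) := by
  intro u hu p hp
  rw [dotProductBilin_apply_apply, dotProduct_comm, cross_dotProduct_swap, neg_eq_zero]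
  exact hu _ (hP hp)

theorem span_pair_le_comap_cross (a b : Fin 7 → ℝ) :
    span ℝ {a, b} ≤ (span ℝ {a, b}).comap (cross (cross a b)) := by
  rw [span_le, Set.insert_subset_iff, Set.singleton_subset_iff]
  constructor
  · rw [SetLike.mem_coe, mem_comap, cross_anticomm a, cross_cross_self_left]
    exact mem_span_pair.2 ⟨-(a ⬝ᵥ b), a ⬝ᵥ a, by module⟩
  · rw [SetLike.mem_coe, mem_comap, cross_anticomm b, cross_cross_self_right]
    exact mem_span_pair.2 ⟨-(b ⬝ᵥ b), b ⬝ᵥ a, by module⟩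

def assocPlane (x y : Fin 7 → ℝ) : Submodule ℝ (Fin 7 → ℝ) := span ℝ {x, y, cross x y}

theorem crossClosed_of_map₂_le {U : Submodule ℝ (Fin 7 → ℝ)} (hU : map₂ cross U U ≤ U) :
    CrossClosed U := by
  intro u hu v hv z hz
  rw [phi0_apply, dotProduct_comm]
  exact hz _ (hU (apply_mem_map₂ cross hu hv))

theorem crossClosed_assocPlane (x y : Fin 7 → ℝ) : CrossClosed (assocPlane x y) := by
  have hx : x ∈ assocPlane x y := subset_span (by simp)
  have hy : y ∈ assocPlane x y := subset_span (by simp)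
  have hxy : cross x y ∈ assocPlane x y := subset_span (by simp)
  have hxxy : cross x (cross x y) ∈ assocPlane x y := by
    rw [cross_cross_self_left]; exact sub_mem (smul_mem _ _ hx) (smul_mem _ _ hy)
  have hyxy : cross y (cross x y) ∈ assocPlane x y := by
    rw [cross_cross_self_right]; exact sub_mem (smul_mem _ _ hx) (smul_mem _ _ hy)
  apply crossClosed_of_map₂_le
  rw [assocPlane, map₂_span_span, span_le, ← assocPlane]
  simp only [Set.image2_subset_iff, Set.mem_insert_iff, Set.mem_singleton_iff, forall_eq_or_imp,
    forall_eq, SetLike.mem_coe]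
  -- each product of two generators is `0`, `cross x y`, `hxxy`, `hyxy`, or minus one of these
  refine ⟨⟨?_, ?_, ?_⟩, ⟨?_, ?_, ?_⟩, ⟨?_, ?_, ?_⟩⟩ <;>
    first
    | (rw [cross_self]; exact zero_mem _)
    | assumption
    | (rw [cross_anticomm]; exact neg_mem ‹_›)

theorem linearIndependent_cross_cons {x y : Fin 7 → ℝ} (h : LinearIndependent ℝ ![x, y]) :
    LinearIndependent ℝ ![cross x y, x, y] := by
  refine linearIndependent_finCons.2 ⟨h, fun hmem => cross_ne_zero_of_linearIndependent h ?_⟩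
  have hperp : span ℝ (Set.range ![x, y]) ≤ LinearMap.ker (dotForm (cross x y)) := by
    rw [span_le, Set.range_subset_iff]
    intro i
    fin_cases i
    exacts [cross_dotProduct_self_left x y, cross_dotProduct_self_right x y]
  exact dotProduct_self_eq_zero.1 (hperp hmem)

theorem finrank_assocPlane {x y : Fin 7 → ℝ} (h : LinearIndependent ℝ ![x, y]) :
    finrank ℝ (assocPlane x y) = 3 := by
  have hrange : ({x, y, cross x y} : Set (Fin 7 → ℝ)) = Set.range ![cross x y, x, y] := by
    rw [range_cons, range_cons_cons_empty, Set.singleton_union, Set.pair_comm y,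
      Set.insert_comm x]
  rw [assocPlane, hrange, finrank_span_eq_card (linearIndependent_cross_cons h), Fintype.card_fin]

theorem WIperp2_eq_singleton_zero_of_five_le_finrank {W : Submodule ℝ (Fin 7 → ℝ)}
    (hW : 5 ≤ finrank ℝ W) : WIperp2 W = {0} := by
  refine Set.eq_singleton_iff_unique_mem.2
    ⟨fun w₁ _ w₂ _ => by simp [phi0_apply], fun v hv => ?_⟩
  by_contra hv0
  set f := (cross v).domRestrict W
  have hrange : finrank ℝ (LinearMap.range f) ≤ 2 := by
    have hle : LinearMap.range f ≤ dotForm.orthogonal W := by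
      rintro _ ⟨w, rfl⟩ w' hw'
      rw [dotProductBilin_apply_apply, dotProduct_comm, LinearMap.domRestrict_apply,
        ← phi0_apply]
      exact hv w w.2 w' hw'
    have := finrank_mono hle
    rw [LinearMap.BilinForm.finrank_orthogonal dotProductBilin_nondegenerate, finrank_fin_fun]
      at this
    omega
  have hker : finrank ℝ (LinearMap.ker f) ≤ 1 := by
    rw [← finrank_map_subtype_eq, ← finrank_span_singleton (K := ℝ) hv0]
    refine finrank_mono ?_
    rintro _ ⟨w, hw, rfl⟩
    exact ker_cross_le_span_singleton hv0 hw
  have := LinearMap.finrank_range_add_finrank_ker f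
  omega

theorem exists_crossClosed_le_of_finrank_eq_five {W : Submodule ℝ (Fin 7 → ℝ)}
    (hW : finrank ℝ W = 5) : ∃ U ≤ W, finrank ℝ U = 3 ∧ CrossClosed U := by
  have hP : finrank ℝ (dotForm.orthogonal W) = 2 := by
    rw [LinearMap.BilinForm.finrank_orthogonal dotProductBilin_nondegenerate, finrank_fin_fun,
      hW]
  obtain ⟨a, b, hab, hspan⟩ := (dotForm.orthogonal W).exists_linearIndependent_pair_span_eq hP
  have hW' : W = dotForm.orthogonal (span ℝ {a, b}) := by
    rw [hspan, LinearMap.BilinForm.orthogonal_orthogonal dotProductBilin_nondegenerate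
      dotProductBilin_isRefl]
  set c := cross a b
  have hc : c ∈ W := by
    rw [hW', LinearMap.BilinForm.mem_orthogonal_span_iff]
    simp [dotProduct_comm _ c, c, cross_dotProduct_self_left, cross_dotProduct_self_right]
  have hc0 : c ≠ 0 := cross_ne_zero_of_linearIndependent hab
  obtain ⟨u, huW, hu⟩ : ∃ u ∈ W, u ∉ span ℝ {c} := SetLike.not_le_iff_exists.1 fun hle => by
    have := finrank_mono hle
    rw [hW, finrank_span_singleton hc0] at this
    omega
  have hcu : LinearIndependent ℝ ![c, u] :=
    (LinearIndependent.pair_iff' hc0).2 fun r hr => hu (mem_span_singleton.2 ⟨r, hr⟩)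
  have hd : cross c u ∈ W := by
    rw [hW'] at huW ⊢
    exact orthogonal_le_comap_cross (span_pair_le_comap_cross a b) huW
  refine ⟨assocPlane c u, span_le.2 ?_, finrank_assocPlane hcu, crossClosed_assocPlane c u⟩
  simp [Set.insert_subset_iff, hc, huW, hd]

end G2

/-- every 5-dimensional subspace `W` of `ℝ⁷` contains a 3-dimensional
subspace closed under the cross product determined by `φ₀`, and `W_I^{⊥,2} = {0}`;
in particular `W` is Type-I 2-coisotropic. -/
theorem g2_dim_five_coisotropic (W : Submodule ℝ (Fin 7 → ℝ))
    (hW : Module.finrank ℝ W = 5) :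
    (∃ U : Submodule ℝ (Fin 7 → ℝ), U ≤ W ∧ Module.finrank ℝ U = 3 ∧ CrossClosed U) ∧
    WIperp2 W = {0} ∧ WIperp2 W ⊆ (W : Set (Fin 7 → ℝ)) := by
  have hperp := G2.WIperp2_eq_singleton_zero_of_five_le_finrank hW.ge
  refine ⟨G2.exists_crossClosed_le_of_finrank_eq_five hW, hperp, ?_⟩
  rw [hperp, Set.singleton_subset_iff]
  exact W.zero_mem
end
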